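/- (Hölder inequality for the pan-integral) Let (X, 𝒜, μ) be a monotone measure space with μ subadditive, E ∈ 𝒜, and let p, q > 1 satisfy 1/p + 1/q = 1. If f, g : E → ℝ are measurable with ‖f‖_{μ,p} < ∞ and ‖g‖_{μ,q} < ∞, then ‖f g‖_{μ,1} ≤ ‖f‖_{μ,p} ‖g‖_{μ,q}, i.e. ∫_E^pan |f g| dμ ≤ (∫_E^pan |f|^p dμ)^{1/p} (∫_E^pan |g|^q dμ)^{1/q}. -/

import Mathlib

open Set Filter
open scoped ENNReal NNReal Topology

variable {X : Type*}

/-- A monotone measure: vanishes on the empty set, positive on the whole space,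
and monotone on measurable sets. -/
structure MonotoneMeasure [MeasurableSpace X] (mu : Set X → ℝ≥0∞) : Prop where
  empty : mu ∅ = 0
  univ_pos : 0 < mu Set.univ
  mono : ∀ ⦃A B : Set X⦄, MeasurableSet A → MeasurableSet B → A ⊆ B → mu A ≤ mu B

/-- A finite measurable partition of `X`. -/
def IsPanPartition [MeasurableSpace X] {n : ℕ} (A : Fin n → Set X) : Prop :=
  (∀ i, MeasurableSet (A i)) ∧ Pairwise (Function.onFun Disjoint A) ∧ (⋃ i, A i) = Set.univ

/-- The `(+,·)`-based pan-integral of a nonnegative function on `X`. -/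
noncomputable def panIntegral [MeasurableSpace X] (mu : Set X → ℝ≥0∞) (f : X → ℝ≥0∞) : ℝ≥0∞ :=
  ⨆ (n : ℕ) (A : Fin n → Set X) (_ : IsPanPartition A) (lam : Fin n → ℝ≥0)
    (_ : ∀ x, ∑ i, Set.indicator (A i) (fun _ => (lam i : ℝ≥0∞)) x ≤ f x),
    ∑ i, (lam i : ℝ≥0∞) * mu (A i)

/-- The pan-integral of `f` on a set `A`, i.e. the pan-integral of `f·χ_A` on `X`. -/
noncomputable def panIntegralOn [MeasurableSpace X] (mu : Set X → ℝ≥0∞) (f : X → ℝ≥0∞)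
    (A : Set X) : ℝ≥0∞ :=
  panIntegral mu (A.indicator f)

/-- Subadditivity of a set function. -/
def PanSubadditive [MeasurableSpace X] (mu : Set X → ℝ≥0∞) : Prop :=
  ∀ ⦃A B : Set X⦄, MeasurableSet A → MeasurableSet B → mu (A ∪ B) ≤ mu A + mu B

/-- Null-additivity of a set function. -/
def PanNullAdditive [MeasurableSpace X] (mu : Set X → ℝ≥0∞) : Prop :=
  ∀ ⦃A B : Set X⦄, MeasurableSet A → MeasurableSet B → mu B = 0 → mu (A ∪ B) = mu A

/-- Continuity from below of a set function. -/
def PanContinuousFromBelow [MeasurableSpace X] (mu : Set X → ℝ≥0∞) : Prop :=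
  ∀ E : ℕ → Set X, (∀ n, MeasurableSet (E n)) → Monotone E →
    Filter.Tendsto (fun n => mu (E n)) Filter.atTop (nhds (mu (⋃ n, E n)))

/-- A real-valued function is pan-integrable if the pan-integrals of its
positive and negative parts are both finite. -/
def PanIntegrable [MeasurableSpace X] (mu : Set X → ℝ≥0∞) (f : X → ℝ) : Prop :=
  panIntegral mu (fun x => ENNReal.ofReal (f x)) < ⊤ ∧
    panIntegral mu (fun x => ENNReal.ofReal (-f x)) < ⊤

/-- The symmetric pan-integral of a real-valued function:
`∫ f⁺ dμ − ∫ f⁻ dμ`. -/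
noncomputable def panIntegralReal [MeasurableSpace X] (mu : Set X → ℝ≥0∞) (f : X → ℝ) : ℝ :=
  (panIntegral mu (fun x => ENNReal.ofReal (f x))).toReal -
    (panIntegral mu (fun x => ENNReal.ofReal (-f x))).toReal

/-- The `‖·‖_{μ,p}` functional: `(∫_E^pan |f|^p dμ)^(1/p)`. -/
noncomputable def panNorm [MeasurableSpace X] (mu : Set X → ℝ≥0∞) (E : Set X) (p : ℝ)
    (f : X → ℝ) : ℝ≥0∞ :=
  (panIntegralOn mu (fun x => ENNReal.ofReal (|f x| ^ p)) E) ^ (1 / p)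


/-!
Young's inequality with a scaling parameter `t > 0` bounds `|f g|` pointwise by
`t^p/p |f|^p + t^(-q)/q |g|^q`. For a monotone subadditive `μ` the pan-integral is monotone,
positively homogeneous and subadditive, so the same bound holds between the pan-integrals over `E`;
minimising over `t` turns the right-hand side into `‖f‖_{μ,p} ‖g‖_{μ,q}`.

Subadditivity is the substantial step. Given a simple function `∑ cᵢ χ_{Aᵢ} ≤ u + v`, cut each
`Aᵢ` into `N + 2` bands according to the value of `u` at the scale `cᵢ/(N+1)`: on the `k`-th band
`u ≥ k cᵢ/(N+1)` and `v ≥ (N-k) cᵢ/(N+1)`, so two simple functions below `u` and `v` on the refined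
partition recover `N/(N+1)` of `∑ cᵢ μ(Aᵢ)`, by subadditivity of `μ`; then let `N → ∞`.
-/

section PanIntegral

variable [MeasurableSpace X] {mu : Set X → ℝ≥0∞}

def IsMeasurablePartition {ι : Type*} (A : ι → Set X) : Prop :=
  (∀ i, MeasurableSet (A i)) ∧ Pairwise (Function.onFun Disjoint A) ∧ (⋃ i, A i) = Set.univ

lemma IsMeasurablePartition.sum_indicator_eq {ι : Type*} [Fintype ι] {A : ι → Set X}
    (hA : IsMeasurablePartition A) (c : ι → ℝ≥0∞) {i : ι} {x : X} (hx : x ∈ A i) :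
    ∑ j, (A j).indicator (fun _ => c j) x = c i := by
  rw [Finset.sum_eq_single i (fun j _ hji => indicator_of_notMem
    (fun hxj => disjoint_left.mp (hA.2.1 hji) hxj hx) _) (by simp), indicator_of_mem hx]

lemma IsMeasurablePartition.sum_indicator_le_iff {ι : Type*} [Fintype ι] {A : ι → Set X}
    (hA : IsMeasurablePartition A) (c : ι → ℝ≥0∞) (f : X → ℝ≥0∞) :
    (∀ x, ∑ j, (A j).indicator (fun _ => c j) x ≤ f x) ↔ ∀ i, ∀ x ∈ A i, c i ≤ f x := by
  constructor
  · intro h i x hx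
    simpa only [hA.sum_indicator_eq c hx] using h x
  · intro h x
    obtain ⟨i, hx⟩ := mem_iUnion.mp (hA.2.2.symm ▸ mem_univ x)
    rw [hA.sum_indicator_eq c hx]
    exact h i x hx

lemma sum_mul_le_panIntegral {ι : Type*} [Fintype ι] {A : ι → Set X} {c : ι → ℝ≥0}
    {f : X → ℝ≥0∞} (hA : IsMeasurablePartition A) (hc : ∀ i, ∀ x ∈ A i, (c i : ℝ≥0∞) ≤ f x) :
    ∑ i, (c i : ℝ≥0∞) * mu (A i) ≤ panIntegral mu f := by
  let e := (Fintype.equivFin ι).symm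
  have hAe : IsPanPartition (A ∘ e) :=
    ⟨fun k => hA.1 (e k), fun k l hkl => hA.2.1 (e.injective.ne hkl),
      e.surjective.iUnion_comp A ▸ hA.2.2⟩
  rw [← e.sum_comp]
  refine le_iSup_of_le _ (le_iSup_of_le (A ∘ e) (le_iSup_of_le hAe
    (le_iSup_of_le (c ∘ e) (le_iSup_of_le ?_ le_rfl))))
  exact (IsMeasurablePartition.sum_indicator_le_iff hAe _ f).2 fun k => hc (e k)

lemma panIntegral_le_of_forall {f : X → ℝ≥0∞} {T : ℝ≥0∞}
    (h : ∀ (n : ℕ) (A : Fin n → Set X) (c : Fin n → ℝ≥0), IsPanPartition A →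
      (∀ i, ∀ x ∈ A i, (c i : ℝ≥0∞) ≤ f x) → ∑ i, (c i : ℝ≥0∞) * mu (A i) ≤ T) :
    panIntegral mu f ≤ T :=
  iSup_le fun n => iSup_le fun A => iSup_le fun hA => iSup_le fun c => iSup_le fun hc =>
    h n A c hA ((IsMeasurablePartition.sum_indicator_le_iff hA _ f).1 hc)

lemma panIntegral_mono {f g : X → ℝ≥0∞} (hfg : f ≤ g) : panIntegral mu f ≤ panIntegral mu g :=
  panIntegral_le_of_forall fun _ _ _ hA hc =>
    sum_mul_le_panIntegral hA fun i x hx => (hc i x hx).trans (hfg x)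

lemma panIntegral_const_mul_le {c : ℝ≥0∞} (hc0 : c ≠ 0) (hctop : c ≠ ⊤) (f : X → ℝ≥0∞) :
    panIntegral mu (fun x => c * f x) ≤ c * panIntegral mu f := by
  lift c to ℝ≥0 using hctop
  have hc0' : c ≠ 0 := by exact_mod_cast hc0
  refine panIntegral_le_of_forall fun n A d hA hd => ?_
  have hdc : ∀ i, ∀ x ∈ A i, ((d i / c : ℝ≥0) : ℝ≥0∞) ≤ f x := fun i x hx => by
    rw [ENNReal.coe_div hc0', ENNReal.div_le_iff hc0 ENNReal.coe_ne_top, mul_comm]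
    exact hd i x hx
  calc ∑ i, (d i : ℝ≥0∞) * mu (A i) = c * ∑ i, ((d i / c : ℝ≥0) : ℝ≥0∞) * mu (A i) := by
        simp_rw [Finset.mul_sum, ← mul_assoc, ← ENNReal.coe_mul, mul_div_cancel₀ _ hc0']
    _ ≤ c * panIntegral mu f := by gcongr; exact sum_mul_le_panIntegral hA hdc

lemma IsMeasurablePartition.refine {ι κ : Type*} [MeasurableSpace κ] [MeasurableSingletonClass κ]
    {A : ι → Set X} (hA : IsMeasurablePartition A) {φ : ι → X → κ} (hφ : ∀ i, Measurable (φ i)) :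
    IsMeasurablePartition fun j : ι × κ => A j.1 ∩ φ j.1 ⁻¹' {j.2} := by
  refine ⟨fun j => (hA.1 j.1).inter (hφ j.1 (measurableSet_singleton j.2)), ?_, ?_⟩
  · rintro ⟨i, k⟩ ⟨i', k'⟩ hne
    by_cases hi : i = i'
    · subst hi
      have hk : k ≠ k' := fun hk => hne (by rw [hk])
      exact ((disjoint_singleton.2 hk).preimage (φ i)).mono inter_subset_right inter_subset_right
    · exact (hA.2.1 hi).mono inter_subset_left inter_subset_left
  · refine eq_univ_of_forall fun x => ?_
    obtain ⟨i, hx⟩ := mem_iUnion.mp (hA.2.2.symm ▸ mem_univ x)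
    exact mem_iUnion.mpr ⟨(i, φ i x), hx, rfl⟩

lemma PanSubadditive.biUnion_le_sum (hsub : PanSubadditive mu) (hempty : mu ∅ = 0) {κ : Type*}
    (s : Finset κ) {B : κ → Set X} (hB : ∀ k, MeasurableSet (B k)) :
    mu (⋃ k ∈ s, B k) ≤ ∑ k ∈ s, mu (B k) := by
  classical
  induction s using Finset.induction_on with
  | empty => simp [hempty]
  | insert a s ha ih =>
    rw [Finset.set_biUnion_insert, Finset.sum_insert ha]
    exact (hsub (hB a) (.biUnion s.countable_toSet fun k _ => hB k)).trans (add_le_add_right ih _)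

lemma MonotoneMeasure.le_sum_of_subset_iUnion (hmu : MonotoneMeasure mu) (hsub : PanSubadditive mu)
    {κ : Type*} [Fintype κ] {A : Set X} {B : κ → Set X} (hA : MeasurableSet A)
    (hB : ∀ k, MeasurableSet (B k)) (hAB : A ⊆ ⋃ k, B k) : mu A ≤ ∑ k, mu (B k) := by
  calc mu A ≤ mu (⋃ k ∈ Finset.univ, B k) :=
        hmu.mono hA (.biUnion (Finset.univ.countable_toSet) fun k _ => hB k) (by simpa using hAB)
    _ ≤ ∑ k, mu (B k) := hsub.biUnion_le_sum hmu.empty _ hB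

end PanIntegral

section Bands

lemma NNReal.floor_succ_mul_div_le (N : ℕ) (t : ℝ≥0) : (⌊(N + 1) * t⌋₊ : ℝ≥0) / (N + 1) ≤ t := by
  rw [div_le_iff₀ (by positivity), mul_comm]
  exact Nat.floor_le bot_le

lemma NNReal.floor_succ_mul_le {N : ℕ} {t : ℝ≥0} (ht : t ≤ 1) : ⌊(N + 1) * t⌋₊ ≤ N + 1 :=
  Nat.floor_le_of_le (by exact_mod_cast mul_le_of_le_one_right bot_le ht)

lemma NNReal.sub_floor_succ_mul_div_add_le_one (N : ℕ) {t : ℝ≥0} (ht : t ≤ 1) :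
    ((N - ⌊(N + 1) * t⌋₊ : ℕ) : ℝ≥0) / (N + 1) + t ≤ 1 := by
  set k := ⌊(N + 1) * t⌋₊
  rcases le_or_gt N k with hNk | hkN
  · simpa [Nat.sub_eq_zero_of_le hNk] using ht
  have hlt : (N + 1) * t < k + 1 := Nat.lt_floor_add_one _
  rw [← NNReal.coe_le_coe] at ht ⊢
  rw [← NNReal.coe_lt_coe] at hlt
  simp only [NNReal.coe_add, NNReal.coe_div, NNReal.coe_mul, NNReal.coe_natCast, NNReal.coe_one,
    Nat.cast_sub hkN.le] at hlt ⊢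
  rw [div_add' _ _ _ (by positivity), div_le_one (by positivity)]
  linarith

noncomputable def bandRatio (lam : ℝ≥0) (y : ℝ≥0∞) : ℝ≥0 := (min y lam).toNNReal / lam

noncomputable def bandIndex (N : ℕ) (lam : ℝ≥0) (y : ℝ≥0∞) : ℕ := ⌊(N + 1) * bandRatio lam y⌋₊

lemma measurable_bandIndex (N : ℕ) (lam : ℝ≥0) : Measurable (bandIndex N lam) :=
  Nat.measurable_floor.comp (measurable_const.mul
    ((ENNReal.measurable_toNNReal.comp (measurable_id.min measurable_const)).div_const _))

lemma ENNReal.coe_toNNReal_min_coe (lam : ℝ≥0) (y : ℝ≥0∞) :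
    ((min y lam).toNNReal : ℝ≥0∞) = min y lam :=
  ENNReal.coe_toNNReal (ne_top_of_le_ne_top ENNReal.coe_ne_top (min_le_right _ _))

lemma ENNReal.toNNReal_min_coe_le (lam : ℝ≥0) (y : ℝ≥0∞) : (min y lam).toNNReal ≤ lam := by
  rw [← ENNReal.coe_le_coe, ENNReal.coe_toNNReal_min_coe]
  exact min_le_right _ _

lemma bandRatio_mul (lam : ℝ≥0) (y : ℝ≥0∞) : bandRatio lam y * lam = (min y lam).toNNReal :=
  div_mul_cancel_of_imp fun h => by
    subst h; exact nonpos_iff_eq_zero.1 (ENNReal.toNNReal_min_coe_le 0 y)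

lemma bandRatio_le_one (lam : ℝ≥0) (y : ℝ≥0∞) : bandRatio lam y ≤ 1 :=
  div_le_one_of_le₀ (ENNReal.toNNReal_min_coe_le lam y) bot_le

lemma coe_bandRatio_mul_le (lam : ℝ≥0) (y : ℝ≥0∞) : ((bandRatio lam y * lam : ℝ≥0) : ℝ≥0∞) ≤ y := by
  rw [bandRatio_mul, ENNReal.coe_toNNReal_min_coe]
  exact min_le_left _ _

lemma le_coe_bandRatio_mul_add {lam : ℝ≥0} {y z : ℝ≥0∞} (h : (lam : ℝ≥0∞) ≤ y + z) :
    (lam : ℝ≥0∞) ≤ ((bandRatio lam y * lam : ℝ≥0) : ℝ≥0∞) + z := by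
  rw [bandRatio_mul, ENNReal.coe_toNNReal_min_coe]
  rcases le_total y lam with hy | hy
  · rwa [min_eq_left hy]
  · rw [min_eq_right hy]
    exact le_self_add

lemma bandIndex_le (N : ℕ) (lam : ℝ≥0) (y : ℝ≥0∞) : bandIndex N lam y ≤ N + 1 :=
  NNReal.floor_succ_mul_le (bandRatio_le_one lam y)

lemma coe_bandIndex_div_mul_le (N : ℕ) (lam : ℝ≥0) (y : ℝ≥0∞) :
    (((bandIndex N lam y : ℝ≥0) / (N + 1) * lam : ℝ≥0) : ℝ≥0∞) ≤ y :=
  le_trans (by gcongr; exact NNReal.floor_succ_mul_div_le N _) (coe_bandRatio_mul_le lam y)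

lemma coe_sub_bandIndex_div_mul_le {N : ℕ} {lam : ℝ≥0} {y z : ℝ≥0∞} (h : (lam : ℝ≥0∞) ≤ y + z) :
    ((((N - bandIndex N lam y : ℕ) : ℝ≥0) / (N + 1) * lam : ℝ≥0) : ℝ≥0∞) ≤ z := by
  refine ENNReal.le_of_add_le_add_left ENNReal.coe_ne_top ((le_of_eq (add_comm _ _)).trans
    (le_trans ?_ (le_coe_bandRatio_mul_add h)))
  rw [← ENNReal.coe_add, ENNReal.coe_le_coe, ← add_mul]
  exact mul_le_of_le_one_left bot_le
    (NNReal.sub_floor_succ_mul_div_add_le_one N (bandRatio_le_one lam y))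

end Bands

lemma ENNReal.le_of_forall_natCast_div_succ_mul_le {S T : ℝ≥0∞}
    (h : ∀ N : ℕ, (((N : ℝ≥0) / (N + 1) : ℝ≥0) : ℝ≥0∞) * S ≤ T) : S ≤ T := by
  refine ENNReal.le_of_forall_lt_one_mul_le fun a ha => ?_
  lift a to ℝ≥0 using ha.ne_top
  obtain ⟨N, hN⟩ := ((tendsto_natCast_div_add_atTop (1 : ℝ≥0)).eventually
    (lt_mem_nhds (ENNReal.coe_lt_one_iff.1 ha))).exists
  exact le_trans (by gcongr) (h N)

section Subadditivity

variable [MeasurableSpace X] {mu : Set X → ℝ≥0∞}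

lemma natCast_div_succ_mul_sum_le_panIntegral_add (hmu : MonotoneMeasure mu)
    (hsub : PanSubadditive mu) {u v : X → ℝ≥0∞} (hu : Measurable u) {ι : Type*} [Fintype ι]
    {A : ι → Set X} {c : ι → ℝ≥0} (hA : IsMeasurablePartition A)
    (hc : ∀ i, ∀ x ∈ A i, (c i : ℝ≥0∞) ≤ u x + v x) (N : ℕ) :
    (((N : ℝ≥0) / (N + 1) : ℝ≥0) : ℝ≥0∞) * ∑ i, (c i : ℝ≥0∞) * mu (A i)
      ≤ panIntegral mu u + panIntegral mu v := by
  let φ : ι → X → Fin (N + 2) := fun i x =>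
    ⟨bandIndex N (c i) (u x), Nat.lt_succ_of_le (bandIndex_le N (c i) (u x))⟩
  have hφ : ∀ i, Measurable (φ i) := fun i => measurable_to_countable' fun k => by
    convert ((measurable_bandIndex N (c i)).comp hu) (measurableSet_singleton k.val) using 1
    ext x
    simp [φ, Fin.ext_iff]
  let C : ι × Fin (N + 2) → Set X := fun j => A j.1 ∩ φ j.1 ⁻¹' {j.2}
  have hC : IsMeasurablePartition C := hA.refine hφ
  let a : ι × Fin (N + 2) → ℝ≥0 := fun j => (j.2 : ℝ≥0) / (N + 1) * c j.1
  let b : ι × Fin (N + 2) → ℝ≥0 := fun j => ((N - j.2 : ℕ) : ℝ≥0) / (N + 1) * c j.1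
  have hband : ∀ j, ∀ x ∈ C j, bandIndex N (c j.1) (u x) = j.2 := fun j x hx =>
    congrArg Fin.val hx.2
  have ha : ∀ j, ∀ x ∈ C j, (a j : ℝ≥0∞) ≤ u x := fun j x hx => by
    have := coe_bandIndex_div_mul_le N (c j.1) (u x)
    rwa [hband j x hx] at this
  have hb : ∀ j, ∀ x ∈ C j, (b j : ℝ≥0∞) ≤ v x := fun j x hx => by
    have := coe_sub_bandIndex_div_mul_le (N := N) (hc j.1 x hx.1)
    rwa [hband j x hx] at this
  have hab : ∀ j, (N : ℝ≥0) / (N + 1) * c j.1 ≤ a j + b j := fun j => by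
    rw [← add_mul, ← add_div]
    gcongr
    exact_mod_cast (by omega : N ≤ (j.2 : ℕ) + (N - j.2))
  have hAC : ∀ i, mu (A i) ≤ ∑ k, mu (C (i, k)) := fun i =>
    hmu.le_sum_of_subset_iUnion hsub (hA.1 i) (fun k => hC.1 (i, k))
      fun x hx => mem_iUnion.2 ⟨φ i x, hx, rfl⟩
  calc (((N : ℝ≥0) / (N + 1) : ℝ≥0) : ℝ≥0∞) * ∑ i, (c i : ℝ≥0∞) * mu (A i)
      = ∑ i, (((N : ℝ≥0) / (N + 1) * c i : ℝ≥0) : ℝ≥0∞) * mu (A i) := by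
        simp_rw [Finset.mul_sum, ← mul_assoc, ENNReal.coe_mul]
    _ ≤ ∑ i, (((N : ℝ≥0) / (N + 1) * c i : ℝ≥0) : ℝ≥0∞) * ∑ k, mu (C (i, k)) := by
        gcongr with i; exact hAC i
    _ = ∑ j, (((N : ℝ≥0) / (N + 1) * c j.1 : ℝ≥0) : ℝ≥0∞) * mu (C j) := by
        rw [Fintype.sum_prod_type]; simp_rw [Finset.mul_sum]
    _ ≤ ∑ j, ((a j : ℝ≥0∞) + b j) * mu (C j) := by
        gcongr with j; exact_mod_cast hab j
    _ = ∑ j, (a j : ℝ≥0∞) * mu (C j) + ∑ j, (b j : ℝ≥0∞) * mu (C j) := by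
        simp_rw [add_mul, Finset.sum_add_distrib]
    _ ≤ panIntegral mu u + panIntegral mu v :=
        add_le_add (sum_mul_le_panIntegral hC ha) (sum_mul_le_panIntegral hC hb)

lemma panIntegral_add_le (hmu : MonotoneMeasure mu) (hsub : PanSubadditive mu)
    {u : X → ℝ≥0∞} (hu : Measurable u) (v : X → ℝ≥0∞) :
    panIntegral mu (u + v) ≤ panIntegral mu u + panIntegral mu v :=
  panIntegral_le_of_forall fun _ _ _ hA hc => ENNReal.le_of_forall_natCast_div_succ_mul_le
    (natCast_div_succ_mul_sum_le_panIntegral_add hmu hsub hu hA hc)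

end Subadditivity

section Young

variable {p q : ℝ}

lemma abs_mul_le_young_rpow (hpq : p.HolderConjugate q) (x y : ℝ) {t : ℝ} (ht : 0 < t) :
    |x * y| ≤ t ^ p / p * |x| ^ p + t ^ (-q) / q * |y| ^ q := by
  calc |x * y| = (t * |x|) * (|y| / t) := by rw [abs_mul]; field_simp
    _ ≤ (t * |x|) ^ p / p + (|y| / t) ^ q / q :=
        Real.young_inequality_of_nonneg (by positivity) (by positivity) hpq
    _ = t ^ p / p * |x| ^ p + t ^ (-q) / q * |y| ^ q := by
        rw [Real.mul_rpow ht.le (abs_nonneg x), Real.div_rpow (abs_nonneg y) ht.le,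
          Real.rpow_neg ht.le]
        ring

-- At `t ^ (p + q) = b / a` the two terms of Young's inequality balance, which is its equality case.
lemma Real.exists_young_rpow_eq (hpq : p.HolderConjugate q) {a b : ℝ} (ha : 0 < a) (hb : 0 < b) :
    ∃ t > 0, t ^ p / p * a + t ^ (-q) / q * b = a ^ (1 / p) * b ^ (1 / q) := by
  have hp := hpq.pos
  have hq := hpq.symm.pos
  set t := (b / a) ^ (1 / (p + q))
  have ht : 0 < t := by positivity
  have htpq : t ^ (p + q) = b / a := by
    rw [← Real.rpow_mul (by positivity), one_div_mul_cancel (add_pos hp hq).ne', Real.rpow_one]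
  have hbal : t ^ (-q) * b = t ^ p * a := by
    rw [show b = t ^ (p + q) * a by rw [htpq]; field_simp, Real.rpow_add ht, Real.rpow_neg ht.le]
    field_simp
  have hMp : (t ^ p * a) ^ (1 / p) = t * a ^ (1 / p) := by
    rw [Real.mul_rpow (by positivity) ha.le, ← Real.rpow_mul ht.le, mul_one_div_cancel hp.ne',
      Real.rpow_one]
  have hMq : (t ^ (-q) * b) ^ (1 / q) = t⁻¹ * b ^ (1 / q) := by
    rw [Real.mul_rpow (by positivity) hb.le, ← Real.rpow_mul ht.le, mul_one_div,
      neg_div_self hq.ne', Real.rpow_neg_one]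
  refine ⟨t, ht, ?_⟩
  calc t ^ p / p * a + t ^ (-q) / q * b = t ^ p * a / p + t ^ (-q) * b / q := by ring
    _ = t ^ p * a * (1 / p + 1 / q) := by rw [hbal]; ring
    _ = (t ^ p * a) ^ (1 / p) * (t ^ (-q) * b) ^ (1 / q) := by
        rw [hbal, ← Real.rpow_add (by positivity), hpq.one_div_add_one_div, div_one, mul_one,
          Real.rpow_one]
    _ = a ^ (1 / p) * b ^ (1 / q) := by rw [hMp, hMq]; field_simp

lemma Real.le_rpow_mul_rpow_of_forall_le_young (hpq : p.HolderConjugate q) {l a b : ℝ} (ha : 0 ≤ a)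
    (hb : 0 ≤ b) (h : ∀ t > 0, l ≤ t ^ p / p * a + t ^ (-q) / q * b) :
    l ≤ a ^ (1 / p) * b ^ (1 / q) := by
  have hδ : ∀ δ > 0, l ≤ (a + δ) ^ (1 / p) * (b + δ) ^ (1 / q) := fun δ hδ => by
    obtain ⟨t, ht, heq⟩ := Real.exists_young_rpow_eq hpq (a := a + δ) (b := b + δ) (by positivity)
      (by positivity)
    have hp := hpq.pos
    have hq := hpq.symm.pos
    rw [← heq]
    exact (h t ht).trans (by gcongr <;> linarith)
  have hlim : Tendsto (fun δ => (a + δ) ^ (1 / p) * (b + δ) ^ (1 / q)) (𝓝[>] 0)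
      (𝓝 (a ^ (1 / p) * b ^ (1 / q))) := by
    refine tendsto_nhdsWithin_of_tendsto_nhds ?_
    have hcont : Continuous fun δ : ℝ => (a + δ) ^ (1 / p) * (b + δ) ^ (1 / q) :=
      ((Real.continuous_rpow_const hpq.one_div_nonneg).comp
          (continuous_const.add continuous_id)).mul
        ((Real.continuous_rpow_const hpq.symm.one_div_nonneg).comp
          (continuous_const.add continuous_id))
    simpa using hcont.tendsto 0
  exact ge_of_tendsto hlim (eventually_nhdsWithin_of_forall hδ)

end Young

lemma ENNReal.le_rpow_mul_rpow_of_forall_le_young {p q : ℝ} (hpq : p.HolderConjugate q)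
    {L A B : ℝ≥0∞} (hA : A ≠ ⊤) (hB : B ≠ ⊤)
    (h : ∀ t > 0, L ≤ ENNReal.ofReal (t ^ p / p) * A + ENNReal.ofReal (t ^ (-q) / q) * B) :
    L ≤ A ^ (1 / p) * B ^ (1 / q) := by
  have hbound : ∀ t : ℝ, ENNReal.ofReal (t ^ p / p) * A + ENNReal.ofReal (t ^ (-q) / q) * B ≠ ⊤ :=
    fun t => by finiteness
  have hL : L ≠ ⊤ := ne_top_of_le_ne_top (hbound 1) (h 1 one_pos)
  have hreal : L.toReal ≤ A.toReal ^ (1 / p) * B.toReal ^ (1 / q) := by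
    refine Real.le_rpow_mul_rpow_of_forall_le_young hpq ENNReal.toReal_nonneg ENNReal.toReal_nonneg
      fun t ht => ?_
    have hp := hpq.pos
    have hq := hpq.symm.pos
    convert ENNReal.toReal_mono (hbound t) (h t ht) using 1
    rw [ENNReal.toReal_add (by finiteness) (by finiteness), ENNReal.toReal_mul, ENNReal.toReal_mul,
      ENNReal.toReal_ofReal (by positivity), ENNReal.toReal_ofReal (by positivity)]
  rw [← ENNReal.ofReal_toReal hL, ← ENNReal.ofReal_toReal hA, ← ENNReal.ofReal_toReal hB,
    ENNReal.ofReal_rpow_of_nonneg ENNReal.toReal_nonneg hpq.one_div_nonneg,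
    ENNReal.ofReal_rpow_of_nonneg ENNReal.toReal_nonneg hpq.symm.one_div_nonneg,
    ← ENNReal.ofReal_mul (by positivity)]
  exact ENNReal.ofReal_le_ofReal hreal

section Holder

variable [MeasurableSpace X] {mu : Set X → ℝ≥0∞}

lemma panIntegralOn_abs_mul_le (hmu : MonotoneMeasure mu) (hsub : PanSubadditive mu) {E : Set X}
    (hE : MeasurableSet E) {p q : ℝ} (hpq : p.HolderConjugate q) {f : X → ℝ} (hf : Measurable f)
    (g : X → ℝ) {t : ℝ} (ht : 0 < t) :
    panIntegralOn mu (fun x => ENNReal.ofReal |f x * g x|) E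
      ≤ ENNReal.ofReal (t ^ p / p) * panIntegralOn mu (fun x => ENNReal.ofReal (|f x| ^ p)) E
        + ENNReal.ofReal (t ^ (-q) / q)
          * panIntegralOn mu (fun x => ENNReal.ofReal (|g x| ^ q)) E := by
  have hp := hpq.pos
  have hq := hpq.symm.pos
  set F : X → ℝ≥0∞ := fun x => ENNReal.ofReal (|f x| ^ p)
  set G : X → ℝ≥0∞ := fun x => ENNReal.ofReal (|g x| ^ q)
  set c₁ := ENNReal.ofReal (t ^ p / p)
  set c₂ := ENNReal.ofReal (t ^ (-q) / q)
  have hF : Measurable fun x => c₁ * E.indicator F x :=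
    measurable_const.mul ((ENNReal.measurable_ofReal.comp
      ((Real.continuous_rpow_const hp.le).measurable.comp hf.abs)).indicator hE)
  have hpoint : E.indicator (fun x => ENNReal.ofReal |f x * g x|)
      ≤ (fun x => c₁ * E.indicator F x) + fun x => c₂ * E.indicator G x := fun x => by
    by_cases hx : x ∈ E
    · simp only [Pi.add_apply, indicator_of_mem hx, F, G, c₁, c₂]
      rw [← ENNReal.ofReal_mul (by positivity), ← ENNReal.ofReal_mul (by positivity),
        ← ENNReal.ofReal_add (by positivity) (by positivity)]
      exact ENNReal.ofReal_le_ofReal (abs_mul_le_young_rpow hpq (f x) (g x) ht)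
    · simp [indicator_of_notMem hx]
  calc panIntegralOn mu (fun x => ENNReal.ofReal |f x * g x|) E
      ≤ panIntegral mu ((fun x => c₁ * E.indicator F x) + fun x => c₂ * E.indicator G x) :=
        panIntegral_mono hpoint
    _ ≤ panIntegral mu (fun x => c₁ * E.indicator F x)
          + panIntegral mu (fun x => c₂ * E.indicator G x) := panIntegral_add_le hmu hsub hF _
    _ ≤ c₁ * panIntegralOn mu F E + c₂ * panIntegralOn mu G E := by
        gcongr <;> refine panIntegral_const_mul_le ?_ ENNReal.ofReal_ne_top _ <;>
          exact (ENNReal.ofReal_pos.2 (by positivity)).ne'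

end Holder

theorem panNorm_holder_general [MeasurableSpace X]
    (mu : Set X → ℝ≥0∞) (hmu : MonotoneMeasure mu) (hsub : PanSubadditive mu)
    {E : Set X} (hE : MeasurableSet E)
    (p q : ℝ) (hp : 1 < p) (hpq : 1 / p + 1 / q = 1)
    (f g : X → ℝ) (hf : Measurable f)
    (hfp : panNorm mu E p f < ⊤) (hgq : panNorm mu E q g < ⊤) :
    panNorm mu E 1 (fun x => f x * g x) ≤ panNorm mu E p f * panNorm mu E q g := by
  have hpq' : p.HolderConjugate q :=
    Real.holderConjugate_iff.2 ⟨hp, by simpa only [one_div] using hpq⟩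
  have hfin : ∀ {r : ℝ} {h : X → ℝ}, 0 < r → panNorm mu E r h < ⊤ →
      panIntegralOn mu (fun x => ENNReal.ofReal (|h x| ^ r)) E ≠ ⊤ := fun hr hh =>
    ((ENNReal.rpow_lt_top_iff_of_pos (one_div_pos.2 hr)).1 hh).ne
  have hL : panNorm mu E 1 (fun x => f x * g x)
      = panIntegralOn mu (fun x => ENNReal.ofReal |f x * g x|) E := by
    simp only [panNorm, Real.rpow_one, div_one, ENNReal.rpow_one]
  rw [hL]
  exact ENNReal.le_rpow_mul_rpow_of_forall_le_young hpq' (hfin hpq'.pos hfp)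
    (hfin hpq'.symm.pos hgq) fun t ht => panIntegralOn_abs_mul_le hmu hsub hE hpq' hf g ht

theorem panNorm_holder [MeasurableSpace X]
    (mu : Set X → ℝ≥0∞) (hmu : MonotoneMeasure mu) (hsub : PanSubadditive mu)
    {E : Set X} (hE : MeasurableSet E)
    (p q : ℝ) (hp : 1 < p) (hq : 1 < q) (hpq : 1 / p + 1 / q = 1)
    (f g : X → ℝ) (hf : Measurable f) (hg : Measurable g)
    (hfp : panNorm mu E p f < ⊤) (hgq : panNorm mu E q g < ⊤) :
    panNorm mu E 1 (fun x => f x * g x) ≤ panNorm mu E p f * panNorm mu E q g :=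
  panNorm_holder_general mu hmu hsub hE p q hp hpq f g hf hfp hgq
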